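/- Let q₀ ∈ C¹[0,1] be not identically zero and let R_j → ∞ be real. Then the sequence of complex numbers N_j = ∫₀¹ (2i e^{(R_j/2)(1-x)} e^{-i√3 R_j/2} sin(√3 R_j x/2) − e^{-R_j(1-x)}(1 − e^{-i√3 R_j})) q₀(x) dx is unbounded whenever the integral ∫₀¹ e^{(R_j/2)(1-x)} sin(√3R_j x/2) q₀(x) dx grows like e^{R_j/2}/R_j, and in particular for q₀ with q₀(0) ≠ 0 there exists a choice of R_j along which |N_j| → ∞. -/

import Mathlib

/-!
Writing `J(R) = ∫₀¹ e^{R(1-x)/2} sin(√3Rx/2) q(x) dx`, the integral `N(R)` is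
`α J(R) - β ∫₀¹ e^{-R(1-x)} q(x) dx` with `|α| = 2`, `|β| ≤ 2`, and for `R ≥ 0` the last
integral is bounded by `∫₀¹ |q|`. Hence `|N(R)| ≥ 2|J(R)| - 2∫₀¹ |q|`, and a lower bound
`c e^{R/2}/R` on `|J(R)|` forces `|N(R)| → ∞`.

For the second part, `J(R) = e^{R/2} ∫₀¹ e^{-Rx/2} sin(√3Rx/2) q(x) dx`. With `q` replaced by
`q(0)` this integral is computed in closed form and is `√3/(2R) + O(e^{-R/2})`, while a `C¹`
function is Lipschitz, so replacing `q` by `q(0)` costs at most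
`K ∫₀¹ x e^{-Rx/2} dx ≤ 4K/R²`. Thus `R e^{-R/2} J(R) → (√3/2) q(0)`, which gives the lower
bound with `c = √3|q(0)|/4` along any `R_j → ∞`.
-/

open Filter Asymptotics
open scoped Real

/-- The sequence of complex numbers `N_j` from the ill-conditioning argument, as a
function of the radius `R`. -/
noncomputable def NInt (q₀ : ℝ → ℂ) (R : ℝ) : ℂ :=
  ∫ x in (0:ℝ)..1,
    (2 * Complex.I * (Real.exp ((R / 2) * (1 - x)) : ℂ)
        * Complex.exp (-Complex.I * (Real.sqrt 3 * R / 2))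
        * (Real.sin (Real.sqrt 3 * R * x / 2) : ℂ)
      - (Real.exp (-R * (1 - x)) : ℂ) * (1 - Complex.exp (-Complex.I * (Real.sqrt 3 * R)))) * q₀ x

open MeasureTheory Topology

theorem integral_exp_neg_mul_mul_sin_mul {a b : ℝ} (hab : a ^ 2 + b ^ 2 ≠ 0) :
    ∫ x in (0:ℝ)..1, Real.exp (-(a * x)) * Real.sin (b * x)
      = (b - Real.exp (-a) * (a * Real.sin b + b * Real.cos b)) / (a ^ 2 + b ^ 2) := by
  have hlin : ∀ c x : ℝ, HasDerivAt (fun x : ℝ => c * x) c x := fun c x => by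
    simpa using (hasDerivAt_id x).const_mul c
  have hderiv : ∀ x, HasDerivAt (fun x => -(Real.exp (-(a * x))
      * (a * Real.sin (b * x) + b * Real.cos (b * x))) / (a ^ 2 + b ^ 2))
      (Real.exp (-(a * x)) * Real.sin (b * x)) x := fun x => by
    refine ((((hlin a x).neg.exp).mul (((hlin b x).sin.const_mul a).add
      ((hlin b x).cos.const_mul b))).neg.div_const _).congr_deriv ?_
    simp only [Pi.neg_apply, Pi.add_apply]
    field_simp
    ring
  rw [intervalIntegral.integral_eq_sub_of_hasDerivAt (fun x _ => hderiv x)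
    (Continuous.intervalIntegrable (by fun_prop) 0 1)]
  simp only [mul_zero, neg_zero, Real.exp_zero, Real.sin_zero, Real.cos_zero, mul_one, one_mul]
  ring

theorem integral_mul_exp_neg_mul {a : ℝ} (ha : a ≠ 0) :
    ∫ x in (0:ℝ)..1, x * Real.exp (-(a * x))
      = 1 / a ^ 2 - (1 / a + 1 / a ^ 2) * Real.exp (-a) := by
  have hderiv : ∀ x, HasDerivAt (fun x => -((x / a + 1 / a ^ 2) * Real.exp (-(a * x))))
      (x * Real.exp (-(a * x))) x := fun x => by
    have hlin : HasDerivAt (fun x : ℝ => a * x) a x := by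
      simpa using (hasDerivAt_id x).const_mul a
    refine ((((hasDerivAt_id x).div_const a).add_const (1 / a ^ 2)).mul
      hlin.neg.exp).neg.congr_deriv ?_
    simp only [Pi.neg_apply, id]
    field_simp
    ring
  rw [intervalIntegral.integral_eq_sub_of_hasDerivAt (fun x _ => hderiv x)
    (Continuous.intervalIntegrable (by fun_prop) 0 1)]
  simp only [mul_zero, neg_zero, Real.exp_zero, mul_one, zero_div, zero_add]
  ring

theorem integral_mul_exp_neg_mul_le {a : ℝ} (ha : 0 < a) :
    ∫ x in (0:ℝ)..1, x * Real.exp (-(a * x)) ≤ 1 / a ^ 2 := by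
  rw [integral_mul_exp_neg_mul ha.ne']
  have : 0 ≤ (1 / a + 1 / a ^ 2) * Real.exp (-a) := by positivity
  linarith

theorem tendsto_mul_integral_exp_mul_sin :
    Tendsto (fun R : ℝ =>
        R * ∫ x in (0:ℝ)..1, Real.exp (-(R / 2 * x)) * Real.sin (√3 * R * x / 2))
      atTop (𝓝 (√3 / 2)) := by
  have hformula : ∀ R > 0,
      R * ∫ x in (0:ℝ)..1, Real.exp (-(R / 2 * x)) * Real.sin (√3 * R * x / 2)
        = √3 / 2 - Real.exp (-(R / 2))
          * (Real.sin (√3 * R / 2) / 2 + √3 / 2 * Real.cos (√3 * R / 2)) := by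
    intro R hR
    have hsq : (R / 2) ^ 2 + (√3 * R / 2) ^ 2 = R ^ 2 := by
      rw [div_pow, div_pow, mul_pow, Real.sq_sqrt zero_le_three]; ring
    simp_rw [show ∀ x, √3 * R * x / 2 = √3 * R / 2 * x from fun x => by ring]
    rw [integral_exp_neg_mul_mul_sin_mul (by rw [hsq]; positivity), hsq]
    field_simp
  have hexp : Tendsto (fun R : ℝ => Real.exp (-(R / 2))) atTop (𝓝 0) :=
    Real.tendsto_exp_neg_atTop_nhds_zero.comp (tendsto_id.atTop_div_const two_pos)
  have hbdd : IsBoundedUnder (· ≤ ·) atTop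
      (norm ∘ fun R : ℝ => Real.sin (√3 * R / 2) / 2 + √3 / 2 * Real.cos (√3 * R / 2)) :=
    isBoundedUnder_of ⟨1 / 2 + √3 / 2, fun R => by
      simp only [Function.comp, Real.norm_eq_abs]
      refine (abs_add_le _ _).trans (add_le_add ?_ ?_)
      · rw [abs_div, abs_two]; gcongr; exact Real.abs_sin_le_one _
      · rw [abs_mul, abs_of_nonneg (by positivity)]
        exact mul_le_of_le_one_right (by positivity) (Real.abs_cos_le_one _)⟩
  have hlim := (tendsto_const_nhds (x := √3 / 2)).sub (hexp.zero_mul_isBoundedUnder_le hbdd)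
  rw [sub_zero] at hlim
  exact hlim.congr' (eventually_gt_atTop 0 |>.mono fun R hR => (hformula R hR).symm)

noncomputable def dampedSineIntegral (q : ℝ → ℂ) (R : ℝ) : ℂ :=
  ∫ x in (0:ℝ)..1, (Real.exp (-(R / 2 * x)) : ℂ) * (Real.sin (√3 * R * x / 2) : ℂ) * q x

noncomputable def oscIntegral (q : ℝ → ℂ) (R : ℝ) : ℂ :=
  ∫ x in (0:ℝ)..1, (Real.exp ((R / 2) * (1 - x)) : ℂ) * (Real.sin (√3 * R * x / 2) : ℂ) * q x

section

variable {q : ℝ → ℂ}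

theorem oscIntegral_eq_exp_mul (R : ℝ) :
    oscIntegral q R = Real.exp (R / 2) * dampedSineIntegral q R := by
  rw [dampedSineIntegral, ← intervalIntegral.integral_const_mul]
  refine intervalIntegral.integral_congr fun x _ => ?_
  rw [show R / 2 * (1 - x) = R / 2 + -(R / 2 * x) by ring, Real.exp_add]
  push_cast
  ring

theorem dampedSineIntegral_eq (hq : IntervalIntegrable q volume 0 1) (R : ℝ) :
    dampedSineIntegral q R
      = q 0 * ((∫ x in (0:ℝ)..1, Real.exp (-(R / 2 * x)) * Real.sin (√3 * R * x / 2) : ℝ) : ℂ)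
        + ∫ x in (0:ℝ)..1, (Real.exp (-(R / 2 * x)) : ℂ) * (Real.sin (√3 * R * x / 2) : ℂ)
            * (q x - q 0) := by
  have hcont : Continuous fun x : ℝ =>
      (Real.exp (-(R / 2 * x)) : ℂ) * (Real.sin (√3 * R * x / 2) : ℂ) := by
    fun_prop
  rw [← intervalIntegral.integral_ofReal, ← intervalIntegral.integral_const_mul,
    ← intervalIntegral.integral_add]
  · refine intervalIntegral.integral_congr fun x _ => ?_
    push_cast
    ring
  · exact Continuous.intervalIntegrable (by fun_prop) 0 1
  · exact (hq.sub intervalIntegrable_const).continuousOn_mul hcont.continuousOn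

theorem norm_integral_exp_mul_sin_mul_sub_le {K : NNReal}
    (hq : LipschitzOnWith K q (Set.Icc 0 1)) {R : ℝ} (hR : 0 < R) :
    ‖∫ x in (0:ℝ)..1, (Real.exp (-(R / 2 * x)) : ℂ) * (Real.sin (√3 * R * x / 2) : ℂ)
        * (q x - q 0)‖ ≤ 4 * K / R ^ 2 := by
  have hpt : ∀ x ∈ Set.Ioc (0:ℝ) 1,
      ‖(Real.exp (-(R / 2 * x)) : ℂ) * (Real.sin (√3 * R * x / 2) : ℂ) * (q x - q 0)‖
        ≤ K * (x * Real.exp (-(R / 2 * x))) := by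
    intro x hx
    have hlip : ‖q x - q 0‖ ≤ K * x := by
      simpa [dist_eq_norm, abs_of_pos hx.1] using
        hq.dist_le_mul x (Set.Ioc_subset_Icc_self hx) 0 ⟨le_rfl, zero_le_one⟩
    rw [norm_mul, norm_mul, Complex.norm_real, Complex.norm_real,
      Real.norm_of_nonneg (Real.exp_pos _).le]
    calc _ ≤ Real.exp (-(R / 2 * x)) * 1 * (K * x) := by
          gcongr
          exact Real.abs_sin_le_one _
      _ = _ := by ring
  calc _ ≤ ∫ x in (0:ℝ)..1, K * (x * Real.exp (-(R / 2 * x))) :=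
        intervalIntegral.norm_integral_le_of_norm_le zero_le_one (ae_of_all _ hpt)
          (Continuous.intervalIntegrable (by fun_prop) 0 1)
    _ ≤ K * (1 / (R / 2) ^ 2) := by
        rw [intervalIntegral.integral_const_mul]
        gcongr
        exact integral_mul_exp_neg_mul_le (half_pos hR)
    _ = 4 * K / R ^ 2 := by field_simp; ring

theorem tendsto_mul_dampedSineIntegral {K : NNReal} (hq : LipschitzOnWith K q (Set.Icc 0 1)) :
    Tendsto (fun R : ℝ => (R : ℂ) * dampedSineIntegral q R) atTop (𝓝 (√3 / 2 * q 0)) := by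
  have hint : IntervalIntegrable q volume 0 1 :=
    hq.continuousOn.intervalIntegrable_of_Icc zero_le_one
  have hmain := ((Complex.continuous_ofReal.tendsto _).comp
    tendsto_mul_integral_exp_mul_sin).const_mul (q 0)
  have hrem : Tendsto (fun R : ℝ => (R : ℂ) * ∫ x in (0:ℝ)..1,
      (Real.exp (-(R / 2 * x)) : ℂ) * (Real.sin (√3 * R * x / 2) : ℂ) * (q x - q 0))
      atTop (𝓝 0) := by
    have hdecay : Tendsto (fun R : ℝ => 4 * K * R⁻¹) atTop (𝓝 0) := by
      simpa using tendsto_inv_atTop_zero.const_mul (4 * (K : ℝ))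
    refine squeeze_zero_norm' ?_ hdecay
    filter_upwards [eventually_gt_atTop 0] with R hR
    rw [norm_mul, Complex.norm_real, Real.norm_of_nonneg hR.le]
    calc _ ≤ R * (4 * K / R ^ 2) := by
          gcongr
          exact norm_integral_exp_mul_sin_mul_sub_le hq hR
      _ = _ := by field_simp
  have hlim := hmain.add hrem
  rw [add_zero, show q 0 * ((√3 / 2 : ℝ) : ℂ) = √3 / 2 * q 0 by push_cast; ring] at hlim
  refine hlim.congr fun R => ?_
  simp only [Function.comp, dampedSineIntegral_eq hint]
  push_cast
  ring

theorem eventually_le_norm_oscIntegral {K : NNReal} (hq : LipschitzOnWith K q (Set.Icc 0 1))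
    (h0 : q 0 ≠ 0) :
    ∀ᶠ R in atTop, √3 * ‖q 0‖ / 4 * Real.exp (R / 2) / R ≤ ‖oscIntegral q R‖ := by
  have hlt : √3 * ‖q 0‖ / 4 < ‖√3 / 2 * q 0‖ := by
    have : 0 < √3 * ‖q 0‖ := by positivity
    simp only [norm_mul, norm_div, Complex.norm_real, Real.norm_of_nonneg (Real.sqrt_nonneg 3),
      Complex.norm_two]
    linarith
  filter_upwards [(tendsto_mul_dampedSineIntegral hq).norm.eventually_const_lt hlt,
    eventually_gt_atTop 0] with R hR hpos
  rw [norm_mul, Complex.norm_real, Real.norm_of_nonneg hpos.le] at hR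
  rw [oscIntegral_eq_exp_mul, norm_mul, Complex.norm_real,
    Real.norm_of_nonneg (Real.exp_pos _).le, div_le_iff₀ hpos]
  nlinarith [Real.exp_pos (R / 2)]

theorem NInt_eq (hq : IntervalIntegrable q volume 0 1) (R : ℝ) :
    NInt q R = 2 * Complex.I * Complex.exp (-Complex.I * (√3 * R / 2)) * oscIntegral q R
      - (1 - Complex.exp (-Complex.I * (√3 * R)))
        * ∫ x in (0:ℝ)..1, (Real.exp (-R * (1 - x)) : ℂ) * q x := by
  rw [oscIntegral, ← intervalIntegral.integral_const_mul, ← intervalIntegral.integral_const_mul,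
    ← intervalIntegral.integral_sub]
  · exact intervalIntegral.integral_congr fun x _ => by ring
  · exact (hq.continuousOn_mul (Continuous.continuousOn (by fun_prop))).const_mul _
  · exact (hq.continuousOn_mul (Continuous.continuousOn (by fun_prop))).const_mul _

theorem norm_integral_exp_mul_le (hq : IntervalIntegrable q volume 0 1) {R : ℝ} (hR : 0 ≤ R) :
    ‖∫ x in (0:ℝ)..1, (Real.exp (-R * (1 - x)) : ℂ) * q x‖ ≤ ∫ x in (0:ℝ)..1, ‖q x‖ := by
  refine intervalIntegral.norm_integral_le_of_norm_le zero_le_one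
    (ae_of_all _ fun x hx => ?_) hq.norm
  have hexp : Real.exp (-R * (1 - x)) ≤ 1 :=
    Real.exp_le_one_iff.2 (mul_nonpos_of_nonpos_of_nonneg (neg_nonpos.2 hR) (sub_nonneg.2 hx.2))
  rw [norm_mul, Complex.norm_real, Real.norm_of_nonneg (Real.exp_pos _).le]
  exact mul_le_of_le_one_left (norm_nonneg _) hexp

theorem two_mul_norm_oscIntegral_sub_le_norm_NInt (hq : IntervalIntegrable q volume 0 1)
    {R : ℝ} (hR : 0 ≤ R) :
    2 * ‖oscIntegral q R‖ - 2 * ∫ x in (0:ℝ)..1, ‖q x‖ ≤ ‖NInt q R‖ := by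
  have hα : ‖2 * Complex.I * Complex.exp (-Complex.I * (√3 * R / 2))‖ = 2 := by
    simp [Complex.norm_exp]
  have hβ : ‖1 - Complex.exp (-Complex.I * (√3 * R))‖ ≤ 2 :=
    (norm_sub_le _ _).trans (by norm_num [Complex.norm_exp])
  rw [NInt_eq hq]
  refine le_trans ?_ (norm_sub_norm_le _ _)
  rw [norm_mul (2 * Complex.I * _), hα, norm_mul (1 - _)]
  gcongr
  exact norm_integral_exp_mul_le hq hR

theorem tendsto_norm_NInt {ι : Type*} {l : Filter ι} {R : ι → ℝ}
    (hq : IntervalIntegrable q volume 0 1) (hR : Tendsto R l atTop) {c : ℝ} (hc : 0 < c)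
    (hosc : ∀ᶠ j in l, c * Real.exp (R j / 2) / R j ≤ ‖oscIntegral q (R j)‖) :
    Tendsto (fun j => ‖NInt q (R j)‖) l atTop := by
  have hgrowth : Tendsto (fun r : ℝ => 2 * c * (Real.exp (1 / 2 * r) / r ^ (1 : ℝ))
      - 2 * ∫ x in (0:ℝ)..1, ‖q x‖) atTop atTop :=
    tendsto_atTop_add_const_right _ _
      ((tendsto_exp_mul_div_rpow_atTop 1 _ one_half_pos).const_mul_atTop (by positivity))
  refine tendsto_atTop_mono' l ?_ (hgrowth.comp hR)
  filter_upwards [hosc, hR.eventually_ge_atTop 0] with j hj hRj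
  have := two_mul_norm_oscIntegral_sub_le_norm_NInt hq hRj
  simp only [Function.comp, Real.rpow_one, one_div_mul_eq_div]
  rw [mul_div_assoc] at hj
  linarith

end

theorem stmt14_general (q₀ : ℝ → ℂ) (hq : ContDiffOn ℝ 1 q₀ (Set.Icc (0:ℝ) 1))
    (R : ℕ → ℝ) (hR : Tendsto R atTop atTop) :
    ((∃ c > (0:ℝ), ∀ᶠ j in atTop,
        c * Real.exp (R j / 2) / R j ≤
          ‖∫ x in (0:ℝ)..1, (Real.exp ((R j / 2) * (1 - x)) : ℂ)
              * (Real.sin (Real.sqrt 3 * R j * x / 2) : ℂ) * q₀ x‖) →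
      ¬ ∃ C : ℝ, ∀ j, ‖NInt q₀ (R j)‖ ≤ C) ∧
    (q₀ 0 ≠ 0 → ∃ R' : ℕ → ℝ, Tendsto R' atTop atTop ∧
      Tendsto (fun j => ‖NInt q₀ (R' j)‖) atTop atTop) := by
  obtain ⟨K, hK⟩ := hq.exists_lipschitzOnWith one_ne_zero (convex_Icc 0 1) isCompact_Icc
  have hint : IntervalIntegrable q₀ volume 0 1 :=
    hK.continuousOn.intervalIntegrable_of_Icc zero_le_one
  refine ⟨fun ⟨c, hc, hosc⟩ ⟨C, hC⟩ => ?_, fun h0 => ⟨R, hR, ?_⟩⟩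
  · obtain ⟨j, hj⟩ := ((tendsto_norm_NInt hint hR hc hosc).eventually_gt_atTop C).exists
    exact (hC j).not_gt hj
  · exact tendsto_norm_NInt hint hR (by positivity)
      (hR.eventually (eventually_le_norm_oscIntegral hK h0))

theorem stmt14 (q₀ : ℝ → ℂ) (hq : ContDiffOn ℝ 1 q₀ (Set.Icc (0:ℝ) 1))
    (hne : ∃ x ∈ Set.Icc (0:ℝ) 1, q₀ x ≠ 0)
    (R : ℕ → ℝ) (hR : Tendsto R atTop atTop) :
    ((∃ c > (0:ℝ), ∀ᶠ j in atTop,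
        c * Real.exp (R j / 2) / R j ≤
          ‖∫ x in (0:ℝ)..1, (Real.exp ((R j / 2) * (1 - x)) : ℂ)
              * (Real.sin (Real.sqrt 3 * R j * x / 2) : ℂ) * q₀ x‖) →
      ¬ ∃ C : ℝ, ∀ j, ‖NInt q₀ (R j)‖ ≤ C) ∧
    (q₀ 0 ≠ 0 → ∃ R' : ℕ → ℝ, Tendsto R' atTop atTop ∧
      Tendsto (fun j => ‖NInt q₀ (R' j)‖) atTop atTop) :=
  stmt14_general q₀ hq R hR
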